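/- For every θ ∈ [0, π/2), the point A = (1, tan θ) inspects P_t for every t ∈ [0, 2θ], i.e., for all s ∈ [0,1], ‖(1−s)·A + s·P_t‖ ≥ 1. -/

import Mathlib

open Real Set

/-- The point of the unit circle at angle `φ`. -/
noncomputable def Ppt (φ : ℝ) : EuclideanSpace ℝ (Fin 2) := !₂[Real.cos φ, Real.sin φ]

/-- `A` inspects the perimeter point `P_φ` if no convex combination of `A` and `P_φ`
lies in the open unit disk. -/
def Inspects (A : EuclideanSpace ℝ (Fin 2)) (φ : ℝ) : Prop :=
  ∀ s ∈ Set.Icc (0:ℝ) 1, 1 ≤ ‖(1 - s) • A + s • Ppt φ‖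

/-!
`A = (1, tan θ)` is the intersection of the tangents to the circle at `P_0` and `P_{2θ}`, and
`⟪A, P_t⟫ = cos (t - θ) / cos θ ≥ 1` for `t ∈ [0, 2θ]`. For a unit vector `u`, the half-plane
`{x | 1 ≤ ⟪x, u⟫}` is convex, contains `u`, and misses the open unit ball by Cauchy–Schwarz;
so the whole segment from `A` to `P_t` avoids the open disk.
-/

section InnerProductSpace

variable {E : Type*} [NormedAddCommGroup E] [InnerProductSpace ℝ E]

theorem one_le_norm_sub_smul_add_smul_of_one_le_inner {a u : E} (hu : ‖u‖ = 1)
    (ha : 1 ≤ inner ℝ a u) {s : ℝ} (hs : s ≤ 1) : 1 ≤ ‖(1 - s) • a + s • u‖ := by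
  calc 1 ≤ (1 - s) * inner ℝ a u + s * ‖u‖ ^ 2 := by rw [hu]; nlinarith
    _ = inner ℝ ((1 - s) • a + s • u) u := by
      rw [inner_add_left, real_inner_smul_left, real_inner_smul_left, real_inner_self_eq_norm_sq]
    _ ≤ ‖(1 - s) • a + s • u‖ * ‖u‖ := real_inner_le_norm _ _
    _ = ‖(1 - s) • a + s • u‖ := by rw [hu, mul_one]

end InnerProductSpace

theorem norm_Ppt (φ : ℝ) : ‖Ppt φ‖ = 1 := by
  simp [Ppt, EuclideanSpace.norm_eq, Fin.sum_univ_two]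

theorem inner_Ppt (x y φ : ℝ) : inner ℝ (!₂[x, y] : EuclideanSpace ℝ (Fin 2)) (Ppt φ) =
    x * cos φ + y * sin φ := by
  simp [Ppt, EuclideanSpace.inner_eq_star_dotProduct, Fin.sum_univ_two, dotProduct]
  ring

theorem cos_add_tan_mul_sin {θ : ℝ} (hθ : cos θ ≠ 0) (t : ℝ) :
    cos t + tan θ * sin t = cos (t - θ) / cos θ := by
  rw [tan_eq_sin_div_cos, cos_sub]
  field_simp

theorem one_le_cos_add_tan_mul_sin {θ t : ℝ} (hθ : θ ∈ Ico 0 (π / 2)) (ht : t ∈ Icc 0 (2 * θ)) :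
    1 ≤ cos t + tan θ * sin t := by
  obtain ⟨hθ0, hθπ⟩ := hθ
  have hcos : 0 < cos θ := cos_pos_of_mem_Ioo ⟨by linarith, hθπ⟩
  have hdist : |t - θ| ≤ θ := abs_le.mpr ⟨by linarith [ht.1], by linarith [ht.2]⟩
  have hcos_le : cos θ ≤ cos (t - θ) := by
    rw [← cos_abs (t - θ)]
    exact cos_le_cos_of_nonneg_of_le_pi (abs_nonneg _) (by linarith [pi_pos]) hdist
  rw [cos_add_tan_mul_sin hcos.ne', le_div_iff₀ hcos, one_mul]
  exact hcos_le

theorem initial_point_inspects (θ : ℝ) (hθ : θ ∈ Set.Ico 0 (π/2)) (t : ℝ)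
    (ht : t ∈ Set.Icc 0 (2*θ)) :
    Inspects (!₂[1, Real.tan θ] : EuclideanSpace ℝ (Fin 2)) t := by
  intro s hs
  have h_inner : 1 ≤ inner ℝ (!₂[1, tan θ] : EuclideanSpace ℝ (Fin 2)) (Ppt t) := by
    rw [inner_Ppt, one_mul]
    exact one_le_cos_add_tan_mul_sin hθ ht
  exact one_le_norm_sub_smul_add_smul_of_one_le_inner (norm_Ppt t) h_inner hs.2
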